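/- arXiv:0909.2304 — 7 statements merged into one kernel-verified Lean document; each statement's English description precedes it below -/
import Mathlib

section
/- Let q = 2^n and let f ∈ F_q[x] be any polynomial. Then φ_f(x,y,y) is a square in F_q[x,y]; that is, there exists h ∈ F_q[x,y] with φ_f(x,y,y) = h(x,y)^2. -/
open MvPolynomial

/-- The polynomial `(x+y)(x+z)(y+z)` in `F[x,y,z]`. -/
noncomputable def e3 (F : Type*) [CommRing F] : MvPolynomial (Fin 3) F :=
  (X 0 + X 1) * (X 0 + X 2) * (X 1 + X 2)

/-- The polynomial `f(x) + f(y) + f(z) + f(x+y+z)` in `F[x,y,z]`. -/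
noncomputable def fsum {F : Type*} [CommRing F] (f : Polynomial F) :
    MvPolynomial (Fin 3) F :=
  Polynomial.aeval (X 0 : MvPolynomial (Fin 3) F) f +
    Polynomial.aeval (X 1 : MvPolynomial (Fin 3) F) f +
    Polynomial.aeval (X 2 : MvPolynomial (Fin 3) F) f +
    Polynomial.aeval (X 0 + X 1 + X 2 : MvPolynomial (Fin 3) F) f

/-- Substitution `x ↦ x, y ↦ y, z ↦ y`, from `F[x,y,z]` to `F[x,y]`. -/
noncomputable def substYY (F : Type*) [CommRing F] :
    Fin 3 → MvPolynomial (Fin 2) F := ![X 0, X 1, X 1]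

/-!
In characteristic two, differentiate `(x+y)(x+z)(y+z) φ = f(x) + f(y) + f(z) + f(x+y+z)` with
respect to `z` and set `z = y`: the product vanishes there and its derivative becomes `(x+y)²`,
so `(x+y)² φ(x,y,y) = f'(x) + f'(y)`. Since `f'' = 0` and `F` is perfect, `f' = g²`, hence
`f'(x) + f'(y) = (g(x) + g(y))²`, and `x + y` divides `g(x) + g(y)`. Cancelling `(x+y)²` leaves
`φ(x,y,y) = ((g(x) + g(y)) / (x+y))²`.
-/

namespace Polynomial

theorem derivative_derivative_eq_zero_of_charTwo {R : Type*} [Semiring R] [CharP R 2]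
    (f : R[X]) : derivative (derivative f) = 0 := by
  have h := congrFun (factorial_smul_hasseDeriv (R := R) (k := 2)) f
  rw [Nat.factorial_two, LinearMap.smul_apply, CharTwo.two_nsmul] at h
  exact h.symm

theorem exists_pow_eq_of_derivative_eq_zero {K : Type*} [CommRing K] [IsDomain K] (p : ℕ)
    [Fact p.Prime] [CharP K p] [PerfectRing K p] {f : K[X]} (hf : derivative f = 0) :
    ∃ g : K[X], g ^ p = f := by
  refine ⟨(contract p f).map (frobeniusEquiv K p).symm, ?_⟩
  rw [← map_frobenius_expand, map_expand, map_map, frobenius_comp_frobeniusEquiv_symm, map_id,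
    expand_contract p hf (Fact.out : p.Prime).ne_zero]

theorem add_dvd_aeval_add {R A : Type*} [CommRing R] [CommRing A] [Algebra R A] [CharP A 2]
    (a b : A) (g : R[X]) : a + b ∣ aeval a g + aeval b g := by
  simpa only [CharTwo.sub_eq_add, eval_map_algebraMap] using
    sub_dvd_eval_sub a b (g.map (algebraMap R A))

end Polynomial

section CharTwo

variable {R : Type*} [CommRing R] [CharP R 2]

theorem aeval_substYY_e3 : aeval (substYY R) (e3 R) = 0 := by
  simp [e3, substYY, CharTwo.add_self_eq_zero]

theorem aeval_substYY_pderiv_e3 :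
    aeval (substYY R) (pderiv 2 (e3 R)) = (X 0 + X 1) ^ 2 := by
  simp [e3, substYY, CharTwo.add_self_eq_zero, sq]

theorem aeval_substYY_pderiv_fsum (f : Polynomial R) :
    aeval (substYY R) (pderiv 2 (fsum f)) =
      Polynomial.aeval (X 0) (Polynomial.derivative f) +
        Polynomial.aeval (X 1) (Polynomial.derivative f) := by
  simp [fsum, Derivation.map_aeval, ← Polynomial.aeval_algHom_apply, substYY, add_assoc,
    CharTwo.add_self_eq_zero, add_comm]

theorem X_add_X_sq_mul_aeval_substYY {f : Polynomial R} {φ : MvPolynomial (Fin 3) R}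
    (hφ : e3 R * φ = fsum f) :
    (X 0 + X 1) ^ 2 * aeval (substYY R) φ =
      Polynomial.aeval (X 0) (Polynomial.derivative f) +
        Polynomial.aeval (X 1) (Polynomial.derivative f) := by
  have h := congrArg (fun ψ => aeval (substYY R) (pderiv 2 ψ)) hφ
  simp only [Derivation.leibniz, smul_eq_mul, map_add, map_mul, aeval_substYY_e3,
    aeval_substYY_pderiv_e3, aeval_substYY_pderiv_fsum, zero_mul, zero_add] at h
  rw [mul_comm, h]

end CharTwo

theorem phi_on_diagonal_is_square_general
    (n : ℕ) (F : Type*) [Field F] [Fintype F]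
    (hF : Fintype.card F = 2 ^ n) (f : Polynomial F)
    (φ : MvPolynomial (Fin 3) F) (hφ : e3 F * φ = fsum f) :
    ∃ h : MvPolynomial (Fin 2) F, MvPolynomial.aeval (substYY F) φ = h ^ 2 := by
  have : Fact (Nat.Prime 2) := ⟨Nat.prime_two⟩
  have : CharP F 2 := charP_of_card_eq_prime_pow hF
  obtain ⟨g, hg⟩ := Polynomial.exists_pow_eq_of_derivative_eq_zero 2
    (Polynomial.derivative_derivative_eq_zero_of_charTwo f)
  obtain ⟨h, hh⟩ := Polynomial.add_dvd_aeval_add (X 0 : MvPolynomial (Fin 2) F) (X 1) g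
  have hX : (X 0 + X 1 : MvPolynomial (Fin 2) F) ≠ 0 := by
    rw [← CharTwo.sub_eq_add, sub_ne_zero]
    exact (X_injective (σ := Fin 2) (R := F)).ne (by decide)
  refine ⟨h, mul_left_cancel₀ (pow_ne_zero 2 hX) ?_⟩
  rw [X_add_X_sq_mul_aeval_substYY hφ, ← hg, map_pow, map_pow, ← CharTwo.add_sq, hh, mul_pow]

theorem phi_on_diagonal_is_square
    (n : ℕ) (hn : 0 < n) (F : Type*) [Field F] [Fintype F]
    (hF : Fintype.card F = 2 ^ n) (f : Polynomial F)
    (φ : MvPolynomial (Fin 3) F) (hφ : e3 F * φ = fsum f) :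
    ∃ h : MvPolynomial (Fin 2) F, MvPolynomial.aeval (substYY F) φ = h ^ 2 :=
  phi_on_diagonal_is_square_general n F hF f φ hφ
end

section
/- Let k ≥ 1 and set d = 2^k+1. In the polynomial ring F_{2^k}[x,y,z] one has the identity x^d + y^d + z^d + (x+y+z)^d = (x+y)(x+z)(y+z) · ∏_{α ∈ F_{2^k} \ F_2} (x + αy + (α+1)z); equivalently, φ_d = ∏_{α ∈ F_{2^k} \ F_2} (x + αy + (α+1)z). -/
/-!
With `w = x + z` and `v = y + z` every factor is `x + αy + (α+1)z = w + αv`. Homogenizing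
`∏_{a ∈ F} (T - a) = T^q - T` gives `v · ∏_{α ∈ F} (w + αv) = w^q v + w v^q` in
characteristic 2, and the Frobenius identity `(x+y+z)^q = x^q + y^q + z^q` turns
`x^{q+1} + y^{q+1} + z^{q+1} + (x+y+z)^{q+1}` into the same expression. The factors for
`α = 0` and `α = 1` are `x + z` and `x + y`, which together with `v` make up `(x+y)(x+z)(y+z)`.
-/

open MvPolynomial

/-- The polynomial `x^j + y^j + z^j + (x+y+z)^j` in `F[x,y,z]`. -/
noncomputable def powSum (F : Type*) [CommRing F] (j : ℕ) : MvPolynomial (Fin 3) F :=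
  X 0 ^ j + X 1 ^ j + X 2 ^ j + (X 0 + X 1 + X 2) ^ j

namespace FiniteField

variable {K : Type*} [Field K] [Fintype K]

theorem prod_univ_X_sub_C :
    ∏ a : K, (Polynomial.X - Polynomial.C a) = Polynomial.X ^ Fintype.card K - Polynomial.X := by
  have hmonic : (Polynomial.X ^ Fintype.card K - Polynomial.X : Polynomial K).Monic := by
    apply Polynomial.monic_X_pow_sub
    rw [Polynomial.degree_X]
    exact_mod_cast Fintype.one_lt_card
  have := Polynomial.prod_multiset_X_sub_C_of_monic_of_roots_card_eq hmonic
    (by rw [roots_X_pow_card_sub_X, X_pow_card_sub_X_natDegree_eq K Fintype.one_lt_card]; rfl)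
  rwa [roots_X_pow_card_sub_X] at this

theorem prod_univ_X_sub_C_mul_X :
    ∏ a : K, (X 0 - C a * X 1) =
      (X 0 ^ Fintype.card K - X 0 * X 1 ^ (Fintype.card K - 1) : MvPolynomial (Fin 2) K) := by
  have h := Polynomial.homogenize_finsetProd (s := Finset.univ)
    (p := fun a : K => Polynomial.X - Polynomial.C a) (n := fun _ => 1)
    (fun a _ => Polynomial.natDegree_X_sub_C_le a)
  simpa [prod_univ_X_sub_C, Polynomial.homogenize_sub, Fintype.card_ne_zero] using h.symm

theorem mul_prod_univ_sub_smul {A : Type*} [CommRing A] [Algebra K A] (w v : A) :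
    v * ∏ a : K, (w - a • v) = w ^ Fintype.card K * v - w * v ^ Fintype.card K := by
  have h := congrArg (aeval ![w, v]) (prod_univ_X_sub_C_mul_X (K := K))
  simp only [map_prod, map_sub, map_mul, map_pow, aeval_X, aeval_C, Matrix.cons_val_zero,
    Matrix.cons_val_one] at h
  simp only [Algebra.smul_def, h]
  rw [mul_sub, ← pow_sub_one_mul Fintype.card_ne_zero v]
  ring

end FiniteField

theorem CharTwo.pow_two_pow_succ_add_pow_two_pow_succ {R : Type*} [CommRing R] [CharP R 2]
    (k : ℕ) (x y z : R) :
    x ^ (2 ^ k + 1) + y ^ (2 ^ k + 1) + z ^ (2 ^ k + 1) + (x + y + z) ^ (2 ^ k + 1) =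
      (x + z) ^ 2 ^ k * (y + z) + (x + z) * (y + z) ^ 2 ^ k := by
  simp only [pow_succ _ (2 ^ k), add_pow_char_pow]
  linear_combination (x ^ 2 ^ k * x + y ^ 2 ^ k * y) * CharTwo.two_eq_zero (R := R)

theorem Finset.prod_univ_eq_mul_mul_prod_filter_ne {ι M : Type*} [Fintype ι] [DecidableEq ι]
    [CommMonoid M] {i j : ι} (hij : i ≠ j) (f : ι → M) :
    ∏ a, f a = f i * f j * ∏ a ∈ univ.filter (fun a => a ≠ i ∧ a ≠ j), f a := by
  rw [← mul_prod_erase univ f (mem_univ i),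
    ← mul_prod_erase _ f (mem_erase.2 ⟨hij.symm, mem_univ j⟩), mul_assoc]
  congr 3
  ext a
  simp [and_comm]

theorem gold_factorization_general
    (k : ℕ) (F : Type*) [Field F] [Fintype F] [DecidableEq F]
    (hF : Fintype.card F = 2 ^ k) :
    powSum F (2 ^ k + 1) =
      e3 F * ∏ α ∈ Finset.univ.filter (fun α : F => α ≠ 0 ∧ α ≠ 1),
        (X 0 + C α * X 1 + C (α + 1) * X 2) := by
  have : CharP F 2 := charP_of_card_eq_prime_pow hF
  set w : MvPolynomial (Fin 3) F := X 0 + X 2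
  set v : MvPolynomial (Fin 3) F := X 1 + X 2
  have hfactor (α : F) : X 0 + C α * X 1 + C (α + 1) * X 2 = w + α • v := by
    simp only [w, v, smul_eq_C_mul, map_add, map_one]
    ring
  have hprod : v * ∏ α : F, (w + α • v) = w ^ 2 ^ k * v + w * v ^ 2 ^ k := by
    simpa [CharTwo.sub_eq_add, hF] using FiniteField.mul_prod_univ_sub_smul (K := F) w v
  calc powSum F (2 ^ k + 1) = w ^ 2 ^ k * v + w * v ^ 2 ^ k := by
        rw [powSum, CharTwo.pow_two_pow_succ_add_pow_two_pow_succ]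
    _ = v * (w * (w + v) *
          ∏ α ∈ Finset.univ.filter (fun α : F => α ≠ 0 ∧ α ≠ 1), (w + α • v)) := by
        rw [← hprod, Finset.prod_univ_eq_mul_mul_prod_filter_ne zero_ne_one, zero_smul, one_smul,
          add_zero]
    _ = e3 F * ∏ α ∈ Finset.univ.filter (fun α : F => α ≠ 0 ∧ α ≠ 1),
          (X 0 + C α * X 1 + C (α + 1) * X 2) := by
        rw [Finset.prod_congr rfl fun α _ => hfactor α, e3]
        set P := ∏ α ∈ Finset.univ.filter (fun α : F => α ≠ 0 ∧ α ≠ 1), (w + α • v)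
        linear_combination v * w * P * X 2 * CharTwo.two_eq_zero (R := MvPolynomial (Fin 3) F)

theorem gold_factorization
    (k : ℕ) (hk : 1 ≤ k) (F : Type*) [Field F] [Fintype F] [DecidableEq F]
    (hF : Fintype.card F = 2 ^ k) :
    powSum F (2 ^ k + 1) =
      e3 F * ∏ α ∈ Finset.univ.filter (fun α : F => α ≠ 0 ∧ α ≠ 1),
        (X 0 + C α * X 1 + C (α + 1) * X 2) :=
  gold_factorization_general k F hF
end

section
/- Let d be an odd integer with d ≥ 5 that is neither a Gold number nor a Kasami–Welch number. Then φ_d is squarefree over an algebraic closure of F_2, i.e., φ_d has no repeated irreducible factor in F̄_2[x,y,z]. -/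
/-!
If `r ^ 2` divides `φ_d`, it divides `P = x^d + y^d + z^d + (x+y+z)^d`, so `r` divides every
partial derivative of `P`. In characteristic `2` with `d` odd, `∂ₓP + ∂ᵧP = x^(d-1) + y^(d-1)`
and `∂ᵧP + ∂_zP = y^(d-1) + z^(d-1)`, and these two binomials have no common non-unit factor.
-/

open MvPolynomial

lemma MvPolynomial.dvd_pderiv_of_mul_self_dvd {R σ : Type*} [CommSemiring R]
    {r f : MvPolynomial σ R} (i : σ) (h : r * r ∣ f) : r ∣ pderiv i f := by
  obtain ⟨q, rfl⟩ := h
  rw [pderiv_mul, pderiv_mul]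
  exact dvd_add (dvd_mul_of_dvd_left (dvd_add (dvd_mul_left r _) (dvd_mul_right r _)) q)
    (dvd_mul_of_dvd_left (dvd_mul_right r r) _)

lemma Polynomial.isUnit_of_dvd_C_of_dvd_monic {A : Type*} [CommRing A] [IsDomain A]
    {p q : Polynomial A} {c : A} (hc : c ≠ 0) (hq : q.Monic)
    (hpc : p ∣ Polynomial.C c) (hpq : p ∣ q) : IsUnit p := by
  have hdeg : p.natDegree = 0 := by
    simpa using Polynomial.natDegree_le_of_dvd hpc (Polynomial.C_ne_zero.mpr hc)
  rw [Polynomial.eq_C_of_natDegree_eq_zero hdeg] at hpq ⊢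
  have hlead : p.coeff 0 ∣ q.leadingCoeff := (Polynomial.C_dvd_iff_dvd_coeff _ _).mp hpq _
  rw [hq.leadingCoeff] at hlead
  exact (isUnit_of_dvd_one hlead).map Polynomial.C

/- As polynomials in `x` over `R[y, z]`, `y ^ n + z ^ n` is a nonzero constant and
`x ^ n + y ^ n` is monic. -/
lemma isUnit_of_dvd_X_pow_add_X_pow {R : Type*} [CommRing R] [IsDomain R] {n : ℕ} (hn : n ≠ 0)
    {r : MvPolynomial (Fin 3) R} (h01 : r ∣ X 0 ^ n + X 1 ^ n) (h12 : r ∣ X 1 ^ n + X 2 ^ n) :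
    IsUnit r := by
  let e := finSuccEquiv R 2
  have hX1 : (X 1 : MvPolynomial (Fin 3) R) = X (Fin.succ 0) := rfl
  have hX2 : (X 2 : MvPolynomial (Fin 3) R) = X (Fin.succ 1) := rfl
  have hmonic : (e (X 0 ^ n + X 1 ^ n)).Monic := by
    simpa [e, hX1, finSuccEquiv_X_zero, finSuccEquiv_X_succ] using
      Polynomial.monic_X_pow_add_C (X 0 ^ n : MvPolynomial (Fin 2) R) hn
  have hconst : e (X 1 ^ n + X 2 ^ n) = Polynomial.C (X 0 ^ n + X 1 ^ n) := by
    simp [e, hX1, hX2, finSuccEquiv_X_succ]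
  have hne : (X 0 ^ n + X 1 ^ n : MvPolynomial (Fin 2) R) ≠ 0 := fun h => by
    simpa [hn] using congrArg (eval fun i : Fin 2 => if i = 0 then (1 : R) else 0) h
  have := Polynomial.isUnit_of_dvd_C_of_dvd_monic hne hmonic (hconst ▸ map_dvd e h12)
    (map_dvd e h01)
  exact (MulEquiv.isUnit_map e.toMulEquiv).mp this

lemma pderiv_powSum (R : Type*) [CommRing R] (d : ℕ) (i : Fin 3) :
    pderiv i (powSum R d) =
      (d : MvPolynomial (Fin 3) R) * (X i ^ (d - 1) + (X 0 + X 1 + X 2) ^ (d - 1)) := by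
  fin_cases i <;> simp [powSum, pderiv_X] <;> ring

lemma pderiv_add_pderiv_powSum_of_odd (R : Type*) [CommRing R] [CharP R 2] {d : ℕ}
    (hd : Odd d) (i j : Fin 3) :
    pderiv i (powSum R d) + pderiv j (powSum R d) = X i ^ (d - 1) + X j ^ (d - 1) := by
  have htwo : (2 : MvPolynomial (Fin 3) R) = 0 := CharTwo.two_eq_zero
  rw [pderiv_powSum, pderiv_powSum, natCast_eq_one_of_odd_of_two_eq_zero hd htwo]
  linear_combination (X 0 + X 1 + X 2 : MvPolynomial (Fin 3) R) ^ (d - 1) * htwo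

theorem phi_odd_not_gold_not_kasami_squarefree_general
    (d : ℕ) (hd : 5 ≤ d) (hodd : Odd d)
    (φd : MvPolynomial (Fin 3) (ZMod 2))
    (hφd : e3 (ZMod 2) * φd = powSum (ZMod 2) d) :
    Squarefree (MvPolynomial.map
      (algebraMap (ZMod 2) (AlgebraicClosure (ZMod 2))) φd) := by
  set K := AlgebraicClosure (ZMod 2)
  intro r hr
  have hφ : map (algebraMap (ZMod 2) K) φd ∣ powSum K d :=
    ⟨map (algebraMap (ZMod 2) K) (e3 (ZMod 2)), by
      rw [mul_comm, ← map_mul, hφd]; simp [powSum]⟩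
  have hpderiv (i : Fin 3) : r ∣ pderiv i (powSum K d) :=
    dvd_pderiv_of_mul_self_dvd i (hr.trans hφ)
  have h01 := pderiv_add_pderiv_powSum_of_odd K hodd 0 1 ▸ dvd_add (hpderiv 0) (hpderiv 1)
  have h12 := pderiv_add_pderiv_powSum_of_odd K hodd 1 2 ▸ dvd_add (hpderiv 1) (hpderiv 2)
  exact isUnit_of_dvd_X_pow_add_X_pow (by omega) h01 h12

theorem phi_odd_not_gold_not_kasami_squarefree
    (d : ℕ) (hd : 5 ≤ d) (hodd : Odd d)
    (hGold : ¬ ∃ k : ℕ, 1 ≤ k ∧ d = 2 ^ k + 1)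
    (hKW : ¬ ∃ k : ℕ, 2 ≤ k ∧ d = 2 ^ (2 * k) - 2 ^ k + 1)
    (φd : MvPolynomial (Fin 3) (ZMod 2))
    (hφd : e3 (ZMod 2) * φd = powSum (ZMod 2) d) :
    Squarefree (MvPolynomial.map
      (algebraMap (ZMod 2) (AlgebraicClosure (ZMod 2))) φd) :=
  phi_odd_not_gold_not_kasami_squarefree_general d hd hodd φd hφd
end

section
/- Let q be a power of 2 and let f ∈ F_q[x] be any polynomial. Then (x+y)(x+z)(y+z) divides f(x)+f(y)+f(z)+f(x+y+z) in the polynomial ring F_q[x,y,z]. -/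
open MvPolynomial

/-! In characteristic 2 the sum splits as `(f(x) - f(y)) + (f(z) - f(x+y+z))`, and both
differences are divisible by `x - y = x + y = z - (x+y+z)`; permuting the roles of the variables,
each of `x + y`, `x + z`, `y + z` divides the sum. These linear forms are pairwise non-associated
primes (images of a variable under a shear automorphism), so their product divides it as well. -/

section CharTwo

variable {R A : Type*} [CommRing R] [CommRing A] [Algebra R A] [CharP A 2]

theorem add_dvd_aeval_add_aeval (f : Polynomial R) (a b : A) :
    a + b ∣ Polynomial.aeval a f + Polynomial.aeval b f := by
  simpa only [CharTwo.sub_eq_add, Polynomial.aeval_def, Polynomial.eval₂_eq_eval_map] using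
    Polynomial.sub_dvd_eval_sub a b (f.map (algebraMap R A))

theorem add_dvd_aeval_add_aeval_add_aeval_add_aeval (f : Polynomial R) (a b c : A) :
    a + b ∣ Polynomial.aeval a f + Polynomial.aeval b f + Polynomial.aeval c f +
      Polynomial.aeval (a + b + c) f := by
  have hcd := add_dvd_aeval_add_aeval f c (a + b + c)
  rw [add_comm c, CharTwo.add_cancel_right] at hcd
  rw [add_assoc]
  exact dvd_add (add_dvd_aeval_add_aeval f a b) hcd

end CharTwo

theorem Prime.mul_dvd_of_dvd_of_not_dvd {M : Type*} [CommMonoidWithZero M] [IsCancelMulZero M]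
    {p q a : M} (hp : Prime p) (hq : q ∣ a) (hpa : p ∣ a) (hpq : ¬ p ∣ q) : q * p ∣ a :=
  (hp.irreducible.isRelPrime_iff_not_dvd.mpr hpq).symm.mul_dvd_of_right_isPrimal hq hpa
    hp.isPrimal

theorem not_dvd_of_map_eq_zero {M N G : Type*} [Monoid M] [MonoidWithZero N] [FunLike G M N]
    [MulHomClass G M N] (φ : G) {p q : M} (hp : φ p = 0) (hq : φ q ≠ 0) : ¬ p ∣ q :=
  fun h ↦ hq (zero_dvd_iff.mp (hp ▸ map_dvd φ h))

namespace MvPolynomial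

variable {σ R : Type*} [CommRing R]

noncomputable def addXEquiv [DecidableEq σ] {i j : σ} (hij : i ≠ j) :
    MvPolynomial σ R ≃ₐ[R] MvPolynomial σ R :=
  AlgEquiv.ofAlgHom (aeval (Function.update X i (X i + X j)))
    (aeval (Function.update X i (X i - X j)))
    (by ext k; by_cases hk : k = i <;> simp [hk, hij.symm])
    (by ext k; by_cases hk : k = i <;> simp [hk, hij.symm])

theorem prime_X_add_X [IsDomain R] {i j : σ} (hij : i ≠ j) :
    Prime (X i + X j : MvPolynomial σ R) := by
  classical
  have hX : addXEquiv (R := R) hij (X i) = X i + X j := by simp [addXEquiv]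
  rw [← hX]
  exact (MulEquiv.prime_iff (addXEquiv hij).toMulEquiv).mpr X_prime

end MvPolynomial

theorem e3_dvd_fsum_of_charP {R : Type*} [CommRing R] [IsDomain R] [CharP R 2]
    (f : Polynomial R) : e3 R ∣ fsum f := by
  have h01 : X 0 + X 1 ∣ fsum f := add_dvd_aeval_add_aeval_add_aeval_add_aeval f _ _ _
  have h02 : X 0 + X 2 ∣ fsum f := by
    have h :=
      add_dvd_aeval_add_aeval_add_aeval_add_aeval f (X 0 : MvPolynomial (Fin 3) R) (X 2) (X 1)
    rwa [add_right_comm (X 0), add_right_comm (Polynomial.aeval (X 0) f)] at h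
  have h12 : X 1 + X 2 ∣ fsum f := by
    have h :=
      add_dvd_aeval_add_aeval_add_aeval_add_aeval f (X 1 : MvPolynomial (Fin 3) R) (X 2) (X 0)
    rwa [add_comm (Polynomial.aeval (X 1) f + Polynomial.aeval (X 2) f), ← add_assoc,
      add_comm (X 1 + X 2), ← add_assoc] at h
  have h0102 : (X 0 + X 1) * (X 0 + X 2) ∣ fsum f :=
    (prime_X_add_X (by decide)).mul_dvd_of_dvd_of_not_dvd h01 h02
      (not_dvd_of_map_eq_zero (eval ![0, 1, 0]) (by simp) (by simp))
  exact (prime_X_add_X (by decide)).mul_dvd_of_dvd_of_not_dvd h0102 h12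
    (not_dvd_of_map_eq_zero (eval ![1, 0, 0]) (by simp) (by simp))

theorem e3_dvd_fsum_general
    (n : ℕ) (F : Type*) [Field F] [Fintype F]
    (hF : Fintype.card F = 2 ^ n) (f : Polynomial F) :
    e3 F ∣ fsum f :=
  have := charP_of_card_eq_prime_pow hF
  e3_dvd_fsum_of_charP f

theorem e3_dvd_fsum
    (n : ℕ) (hn : 0 < n) (F : Type*) [Field F] [Fintype F]
    (hF : Fintype.card F = 2 ^ n) (f : Polynomial F) :
    e3 F ∣ fsum f :=
  e3_dvd_fsum_general n F hF f
end

section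
/- Let c ∈ F_4 satisfy c^2 + c + 1 = 0, and let L(x) = x^4 + cx. Then for every positive integer n, the map L : F_{4^n} → F_{4^n} is bijective if and only if n is not divisible by 3. -/
/-!
In characteristic 2 the map `L x = x ^ 4 + c x` is additive, so it is bijective on the finite
field `K` iff its kernel is trivial, i.e. iff `c` has no cube root in `K` (a nonzero root satisfies
`z ^ 3 = -c = c`). Since `c` has order 3, a cube root of `c` has order 9, and in the cyclic group
`Kˣ` of order `4 ^ n - 1` such an element exists iff `9 ∣ 4 ^ n - 1`, i.e. iff `3 ∣ n`.
-/

theorem nine_dvd_four_pow_sub_one_iff (n : ℕ) : 9 ∣ 4 ^ n - 1 ↔ 3 ∣ n := by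
  have hord : orderOf (4 : ZMod 9) = 3 := orderOf_eq_prime (by decide) (by decide)
  rw [← Nat.modEq_iff_dvd' (Nat.one_le_pow _ _ (by norm_num)), Nat.ModEq.comm,
    ← ZMod.natCast_eq_natCast_iff, ← hord, orderOf_dvd_iff_pow_eq_one]
  push_cast
  rfl

section CyclicGroup

variable {G : Type*} [Group G] [IsCyclic G] [Finite G] {p : ℕ} [hp : Fact p.Prime]

theorem IsCyclic.exists_pow_eq_iff_sq_dvd_card {a : G} (ha : a ≠ 1) (hap : a ^ p = 1) :
    (∃ z : G, z ^ p = a) ↔ p ^ 2 ∣ Nat.card G := by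
  constructor
  · rintro ⟨z, rfl⟩
    have hz : orderOf z = p ^ 2 :=
      orderOf_eq_prime_pow (by rwa [pow_one]) (by rwa [← pow_mul, ← sq] at hap)
    exact hz ▸ orderOf_dvd_natCard z
  · intro hdvd
    obtain ⟨g, hg⟩ := IsCyclic.exists_generator (α := G)
    obtain ⟨k, rfl⟩ := mem_powers_iff_mem_zpowers.2 (hg a)
    have hk : p * p ∣ k * p := by
      rw [← sq]
      refine hdvd.trans ?_
      rw [← orderOf_eq_card_of_forall_mem_zpowers hg]
      exact orderOf_dvd_of_pow_eq_one (by rwa [pow_mul])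
    obtain ⟨j, rfl⟩ := Nat.dvd_of_mul_dvd_mul_right hp.out.pos hk
    exact ⟨g ^ j, by rw [← pow_mul, mul_comm]⟩

end CyclicGroup

theorem FiniteField.exists_pow_eq_iff_sq_dvd_card_sub_one {K : Type*} [Field K] [Finite K]
    {p : ℕ} [hp : Fact p.Prime] {a : K} (ha : a ≠ 1) (hap : a ^ p = 1) :
    (∃ z : K, z ^ p = a) ↔ p ^ 2 ∣ Nat.card K - 1 := by
  have ha0 : a ≠ 0 := by rintro rfl; simp [zero_pow hp.out.ne_zero] at hap
  rw [← Nat.card_units, ← IsCyclic.exists_pow_eq_iff_sq_dvd_card (a := Units.mk0 a ha0)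
    (by simpa [Units.ext_iff] using ha) (by simpa [Units.ext_iff] using hap)]
  constructor
  · rintro ⟨z, rfl⟩
    exact ⟨Units.mk0 z (pow_ne_zero_iff hp.out.ne_zero |>.1 ha0), by ext; simp⟩
  · rintro ⟨u, hu⟩
    exact ⟨u, by simpa using congrArg Units.val hu⟩

theorem bijective_pow_expChar_pow_add_mul_iff {R : Type*} [CommRing R] [Finite R] (p k : ℕ)
    [ExpChar R p] (a : R) :
    Function.Bijective (fun x : R => x ^ p ^ k + a * x) ↔ ¬∃ z ≠ 0, z ^ p ^ k + a * z = 0 := by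
  let L : R →+ R := (iterateFrobenius R p k).toAddMonoidHom + AddMonoidHom.mulLeft a
  rw [← Finite.injective_iff_bijective]
  change Function.Injective L ↔ _
  simp only [L, RingHom.toAddMonoidHom_eq_coe, injective_iff_map_eq_zero, AddMonoidHom.add_apply,
    AddMonoidHom.coe_coe, iterateFrobenius_def, AddMonoidHom.coe_mulLeft, ne_eq, not_exists, not_and]
  exact forall_congr' fun _ => not_imp_not.symm

theorem exists_ne_zero_pow_succ_add_mul_eq_zero_iff {R : Type*} [CommRing R] [IsDomain R]
    {a : R} (ha : a ≠ 0) {m : ℕ} (hm : m ≠ 0) :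
    (∃ z ≠ 0, z ^ (m + 1) + a * z = 0) ↔ ∃ z, z ^ m = -a := by
  have hfac : ∀ z : R, z ^ (m + 1) + a * z = z * (z ^ m + a) := fun z => by ring
  constructor
  · rintro ⟨z, hz, hLz⟩
    rw [hfac, mul_eq_zero, or_iff_right hz] at hLz
    exact ⟨z, eq_neg_of_add_eq_zero_left hLz⟩
  · rintro ⟨z, hz⟩
    have hz0 : z ≠ 0 := by rintro rfl; exact ha (by simpa [zero_pow hm] using hz.symm)
    exact ⟨z, hz0, by rw [hfac, hz, neg_add_cancel, mul_zero]⟩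

theorem linearized_bijective_iff_three_not_dvd_general
    (c : GaloisField 2 2) (hc : c ^ 2 + c + 1 = 0)
    (n : ℕ)
    (K : Type*) [Field K] [Fintype K] [Algebra (GaloisField 2 2) K]
    (hK : Fintype.card K = 4 ^ n) :
    Function.Bijective
        (fun x : K => x ^ 4 + algebraMap (GaloisField 2 2) K c * x) ↔
      ¬ (3 ∣ n) := by
  have : CharP K 2 := charP_of_injective_algebraMap (algebraMap (GaloisField 2 2) K).injective 2
  have ha : (algebraMap _ K c) ^ 2 + algebraMap _ K c + 1 = 0 := by
    simpa using congrArg (algebraMap _ K) hc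
  generalize algebraMap (GaloisField 2 2) K c = a at ha ⊢
  have ha1 : a ≠ 1 := by
    rintro rfl
    exact one_ne_zero (by linear_combination ha - CharTwo.two_eq_zero (R := K))
  have ha3 : a ^ 3 = 1 := by linear_combination (a - 1) * ha
  have ha0 : a ≠ 0 := by rintro rfl; simp at ha
  rw [show 4 = 2 ^ 2 by rfl, bijective_pow_expChar_pow_add_mul_iff, show 2 ^ 2 = 3 + 1 by rfl,
    exists_ne_zero_pow_succ_add_mul_eq_zero_iff ha0 three_ne_zero, CharTwo.neg_eq,
    FiniteField.exists_pow_eq_iff_sq_dvd_card_sub_one ha1 ha3, Nat.card_eq_fintype_card, hK]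
  exact not_congr (nine_dvd_four_pow_sub_one_iff n)

theorem linearized_bijective_iff_three_not_dvd
    (c : GaloisField 2 2) (hc : c ^ 2 + c + 1 = 0)
    (n : ℕ) (hn : 0 < n)
    (K : Type*) [Field K] [Fintype K] [Algebra (GaloisField 2 2) K]
    (hK : Fintype.card K = 4 ^ n) :
    Function.Bijective
        (fun x : K => x ^ 4 + algebraMap (GaloisField 2 2) K c * x) ↔
      ¬ (3 ∣ n) :=
  linearized_bijective_iff_three_not_dvd_general c hc n K hK
end

section
/- Let c ∈ F_4 satisfy c^2 + c + 1 = 0. Then for every positive integer n not divisible by 3, the function x ↦ x^{12} + c x^3 is APN on F_{4^n}. -/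
/-!
Write `f x = x ^ 12 + c x ^ 3` as `g (x ^ 3)` with `g y = y ^ 4 + c y`. In characteristic 2 the map
`g` is additive, so `f (x + a) + f x = g ((x + a) ^ 3 + x ^ 3)`, and `x ↦ x ^ 3` is APN. Hence `f` is
APN as soon as `g` is injective, i.e. as soon as `c` is not a cube. A cube root `w` of `c` would be
a ninth root of unity, but for `3 ∤ n` we have `9 ∤ 4 ^ n - 1`, so `w ^ 3 = 1`, i.e. `c = 1`,
which is not a root of `X ^ 2 + X + 1` in characteristic 2.
-/

/-- A function `f` on a finite field `L` is almost perfect nonlinear (APN) if for every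
`a ≠ 0` and every `b`, the equation `f (x + a) + f x = b` has at most 2 solutions. -/
def IsAPN {L : Type*} [Field L] (f : L → L) : Prop :=
  ∀ a : L, a ≠ 0 → ∀ b : L, Set.ncard {x : L | f (x + a) + f x = b} ≤ 2

open Function

theorem IsAPN.comp_addMonoidHom {L : Type*} [Field L] {f : L → L} (hf : IsAPN f) (g : L →+ L)
    (hg : Injective g) : IsAPN (g ∘ f) := by
  intro a ha b
  by_cases hb : b ∈ Set.range g
  · obtain ⟨y, rfl⟩ := hb
    have hset : {x | (g ∘ f) (x + a) + (g ∘ f) x = g y} = {x | f (x + a) + f x = y} := by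
      ext x
      simp only [Set.mem_ofPred_eq, comp_apply, ← map_add, hg.eq_iff]
    exact hset ▸ hf a ha y
  · have hset : {x | (g ∘ f) (x + a) + (g ∘ f) x = b} = ∅ := by
      ext x
      simp only [Set.mem_ofPred_eq, comp_apply, ← map_add, Set.mem_empty_iff_false, iff_false]
      exact fun h => hb ⟨_, h⟩
    rw [hset, Set.ncard_empty]
    exact zero_le_two

section CharTwo

variable {L : Type*} [Field L] [CharP L 2]

theorem isAPN_pow_three : IsAPN fun x : L => x ^ 3 := by
  intro a ha b
  have h2 : (2 : L) = 0 := CharP.cast_eq_zero L 2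
  set S := {x : L | (x + a) ^ 3 + x ^ 3 = b}
  rcases S.eq_empty_or_nonempty with hS | ⟨x₀, hx₀⟩
  · simp [hS]
  have hsub : S ⊆ {x₀, x₀ + a} := by
    intro x (hx : (x + a) ^ 3 + x ^ 3 = b)
    replace hx₀ : (x₀ + a) ^ 3 + x₀ ^ 3 = b := hx₀
    -- `(x + a) ^ 3 + x ^ 3 = a x ^ 2 + a ^ 2 x + a ^ 3` in characteristic 2
    have hfac : a * (x + x₀) * (x + x₀ + a) = 0 := by
      linear_combination hx - hx₀ +
        (x₀ ^ 3 - x ^ 3 - a * x ^ 2 + a * x * x₀ + 2 * a * x₀ ^ 2 - a ^ 2 * x + 2 * a ^ 2 * x₀) * h2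
    rcases mul_eq_zero.1 hfac with hfac | hfac
    · rcases mul_eq_zero.1 hfac with h | h
      · exact absurd h ha
      · exact .inl (by linear_combination h - x₀ * h2)
    · exact .inr (Set.mem_singleton_iff.2 <| by linear_combination hfac - (x₀ + a) * h2)
  calc S.ncard ≤ ({x₀, x₀ + a} : Set L).ncard := Set.ncard_le_ncard hsub
    _ ≤ 2 := (Set.ncard_insert_le _ _).trans (by simp)

theorem injective_iterateFrobenius_two_two_add_mulLeft {c : L} (hc : ∀ w : L, w ^ 3 ≠ c) :
    Injective ((iterateFrobenius L 2 2 : L →+ L) + AddMonoidHom.mulLeft c) := by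
  refine (injective_iff_map_eq_zero _).2 fun y hy => by_contra fun hy0 => hc y ?_
  have h2 : (2 : L) = 0 := CharP.cast_eq_zero L 2
  have hy' : y * (y ^ 3 + c) = 0 := by
    simp only [AddMonoidHom.add_apply, AddMonoidHom.coe_coe, iterateFrobenius_def,
      AddMonoidHom.coe_mulLeft] at hy
    linear_combination hy
  linear_combination (mul_eq_zero.1 hy').resolve_left hy0 - c * h2

end CharTwo

theorem Nat.not_nine_dvd_four_pow_sub_one {n : ℕ} (hn : ¬ 3 ∣ n) : ¬ 9 ∣ 4 ^ n - 1 := by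
  have hmod : 4 ^ n % 9 = 4 ^ (n % 3) % 9 := by
    conv_lhs => rw [← Nat.div_add_mod n 3, pow_add, pow_mul, Nat.mul_mod, Nat.pow_mod]
    norm_num
  have hpos : 0 < 4 ^ n := by positivity
  have hr : n % 3 = 1 ∨ n % 3 = 2 := by omega
  rcases hr with hr | hr <;> rw [hr] at hmod <;> omega

theorem FiniteField.pow_three_eq_one_of_pow_nine_eq_one {K : Type*} [Field K] [Fintype K]
    (h9 : ¬ 9 ∣ Fintype.card K - 1) {w : K} (hw : w ^ 9 = 1) : w ^ 3 = 1 := by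
  have hw0 : w ≠ 0 := by rintro rfl; norm_num at hw
  obtain ⟨k, hk, hord⟩ :=
    (Nat.dvd_prime_pow Nat.prime_three).1 (orderOf_dvd_of_pow_eq_one (n := 3 ^ 2) hw)
  have hcard : orderOf w ∣ Fintype.card K - 1 :=
    orderOf_dvd_of_pow_eq_one (FiniteField.pow_card_sub_one_eq_one w hw0)
  refine orderOf_dvd_iff_pow_eq_one.1 ?_
  interval_cases k
  · simp [hord]
  · simp [hord]
  · exact absurd (hord ▸ hcard :) h9

theorem FiniteField.pow_three_ne_of_pow_three_eq_one {K : Type*} [Field K] [Fintype K]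
    (h9 : ¬ 9 ∣ Fintype.card K - 1) {c : K} (hc3 : c ^ 3 = 1) (hc1 : c ≠ 1) (w : K) :
    w ^ 3 ≠ c := by
  rintro rfl
  exact hc1 (pow_three_eq_one_of_pow_nine_eq_one h9 (by rw [← hc3, ← pow_mul]))

theorem x12_plus_cx3_is_APN_general
    (c : GaloisField 2 2) (hc : c ^ 2 + c + 1 = 0)
    (n : ℕ) (h3 : ¬ (3 ∣ n))
    (K : Type*) [Field K] [Fintype K] [Algebra (GaloisField 2 2) K]
    (hK : Fintype.card K = 4 ^ n) :
    IsAPN (fun x : K => x ^ 12 + algebraMap (GaloisField 2 2) K c * x ^ 3) := by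
  have : CharP K 2 := charP_of_injective_algebraMap (algebraMap (GaloisField 2 2) K).injective 2
  have h2 : (2 : K) = 0 := CharP.cast_eq_zero K 2
  set c' := algebraMap (GaloisField 2 2) K c
  have hc' : c' ^ 2 + c' + 1 = 0 := by simpa using congrArg (algebraMap (GaloisField 2 2) K) hc
  have hc'3 : c' ^ 3 = 1 := by linear_combination (c' - 1) * hc'
  have hc'1 : c' ≠ 1 := fun h => one_ne_zero (by linear_combination hc' - (c' + 2) * h - h2)
  have hcube : ∀ w : K, w ^ 3 ≠ c' := FiniteField.pow_three_ne_of_pow_three_eq_one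
    (hK ▸ Nat.not_nine_dvd_four_pow_sub_one h3) hc'3 hc'1
  have hfac : (fun x : K => x ^ 12 + c' * x ^ 3) =
      ((iterateFrobenius K 2 2 : K →+ K) + AddMonoidHom.mulLeft c') ∘ (· ^ 3) := by
    funext x
    simp [iterateFrobenius_def, ← pow_mul]
  rw [hfac]
  exact isAPN_pow_three.comp_addMonoidHom _ (injective_iterateFrobenius_two_two_add_mulLeft hcube)

theorem x12_plus_cx3_is_APN
    (c : GaloisField 2 2) (hc : c ^ 2 + c + 1 = 0)
    (n : ℕ) (hn : 0 < n) (h3 : ¬ (3 ∣ n))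
    (K : Type*) [Field K] [Fintype K] [Algebra (GaloisField 2 2) K]
    (hK : Fintype.card K = 4 ^ n) :
    IsAPN (fun x : K => x ^ 12 + algebraMap (GaloisField 2 2) K c * x ^ 3) :=
  x12_plus_cx3_is_APN_general c hc n h3 K hK
end

section
/- Let k be an even integer with k ≥ 4 and let f(x) = x^{2^k+1} + x^5 ∈ F_2[x]. Then φ_f is not absolutely irreducible, i.e., φ_f is reducible over an algebraic closure of F_2. -/
/-!
Let `ω ∈ 𝔽₄` be a primitive cube root of unity, so `ω + 1 = ω²`. For `A = 2 ^ a` with `a` even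
we have `ω ^ A = ω`, so on the plane `x = ω y + ω² z` the Frobenius power `x ^ A` equals
`ω y ^ A + ω² z ^ A`. Expanding `x ^ (A + B) = x ^ A x ^ B` shows that
`f(x) + f(y) + f(z) + f(x+y+z)` vanishes on this plane for `f = X ^ (A + B)`, in particular for
`X ^ (2 ^ k + 1)` and `X ^ 5`. As `(x+y)(x+z)(y+z)` does not vanish on the plane, the linear form
`x + ω y + ω² z` divides `φ_f`. It is a proper factor: under `(x, y, z) ↦ (t, 1, 0)` the product
`(x+y)(x+z)(y+z)` becomes quadratic and `f(x) + f(y) + f(z) + f(x+y+z)` becomes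
`t ^ 2 ^ k + t ^ 4`, so `φ_f` becomes a polynomial of degree `2 ^ k - 2 > 1`.
-/

open MvPolynomial

theorem pow_two_pow_eq_self_of_even {M : Type*} [Monoid M] {ω : M} (hω : ω ^ 3 = 1) {k : ℕ}
    (hk : Even k) : ω ^ 2 ^ k = ω := by
  obtain ⟨j, rfl⟩ := hk
  rw [pow_eq_pow_mod _ hω, ← two_mul, pow_mul, Nat.pow_mod]
  norm_num

section CharTwo
variable {S : Type*} [CommRing S] [CharP S 2]

theorem add_mul_pow_two_pow {ω : S} {a : ℕ} (hω : ω ^ 2 ^ a = ω) (y z : S) :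
    (ω * y + (ω + 1) * z) ^ 2 ^ a = ω * y ^ 2 ^ a + (ω + 1) * z ^ 2 ^ a := by
  rw [add_pow_char_pow, mul_pow, mul_pow, add_pow_char_pow, one_pow, hω]

theorem sum_pow_two_pow_add_two_pow_eq_zero {ω : S} {a b : ℕ} (ha : ω ^ 2 ^ a = ω)
    (hb : ω ^ 2 ^ b = ω) (y z : S) :
    (ω * y + (ω + 1) * z) ^ (2 ^ a + 2 ^ b) + y ^ (2 ^ a + 2 ^ b) + z ^ (2 ^ a + 2 ^ b) +
      (ω * y + (ω + 1) * z + y + z) ^ (2 ^ a + 2 ^ b) = 0 := by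
  have hsum : ω * y + (ω + 1) * z + y + z = ω * z + (ω + 1) * y := by
    linear_combination z * CharTwo.two_eq_zero (R := S)
  simp only [hsum, pow_add, add_mul_pow_two_pow ha, add_mul_pow_two_pow hb]
  linear_combination ((ω ^ 2 + ω + 1) * (y ^ 2 ^ a * y ^ 2 ^ b + z ^ 2 ^ a * z ^ 2 ^ b) +
    ω * (ω + 1) * (y ^ 2 ^ a * z ^ 2 ^ b + z ^ 2 ^ a * y ^ 2 ^ b)) * CharTwo.two_eq_zero (R := S)

theorem add_one_pow_two_pow_add_two_pow (t : S) (a b : ℕ) :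
    t ^ (2 ^ a + 2 ^ b) + 1 + (t + 1) ^ (2 ^ a + 2 ^ b) = t ^ 2 ^ a + t ^ 2 ^ b := by
  rw [pow_add, pow_add, add_pow_char_pow, add_pow_char_pow, one_pow]
  linear_combination (t ^ 2 ^ a * t ^ 2 ^ b + 1) * CharTwo.two_eq_zero (R := S)

end CharTwo

theorem aeval_fsum {F S : Type*} [CommRing F] [CommRing S] [Algebra F S] (v : Fin 3 → S)
    (f : Polynomial F) :
    aeval v (fsum f) = Polynomial.aeval (v 0) f + Polynomial.aeval (v 1) f +
      Polynomial.aeval (v 2) f + Polynomial.aeval (v 0 + v 1 + v 2) f := by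
  simp [fsum, ← Polynomial.aeval_algHom_apply]

theorem fsum_add {F : Type*} [CommRing F] (f g : Polynomial F) :
    fsum (f + g) = fsum f + fsum g := by
  simp only [fsum, map_add]
  ring

theorem map_fsum {F G : Type*} [CommRing F] [CommRing G] (g : F →+* G) (f : Polynomial F) :
    map g (fsum f) = fsum (f.map g) := by
  simp [fsum, Polynomial.aeval_def, Polynomial.eval₂_map, Polynomial.hom_eval₂]

theorem map_e3 {F G : Type*} [CommRing F] [CommRing G] (g : F →+* G) :
    map g (e3 F) = e3 G := by
  simp [e3]

theorem polynomial_eval_finSuccEquiv {R : Type*} [CommRing R] {n : ℕ}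
    (p : MvPolynomial (Fin (n + 1)) R) (r : MvPolynomial (Fin n) R) :
    Polynomial.eval r (finSuccEquiv R n p) = aeval (Fin.cons r X) p := by
  induction p using MvPolynomial.induction_on with
  | C a => simp [finSuccEquiv_apply]
  | add p q hp hq => simp [hp, hq]
  | mul_X p i hp =>
    induction i using Fin.cases <;> simp [hp, finSuccEquiv_X_zero, finSuccEquiv_X_succ]

theorem finSuccEquiv_rename_succ {R : Type*} [CommRing R] {n : ℕ}
    (r : MvPolynomial (Fin n) R) :
    finSuccEquiv R n (rename Fin.succ r) = Polynomial.C r := by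
  induction r using MvPolynomial.induction_on with
  | C a => simp [finSuccEquiv_apply]
  | add p q hp hq => simp [hp, hq]
  | mul_X p i hp => simp [hp, finSuccEquiv_X_succ]

theorem X_zero_sub_rename_dvd {R : Type*} [CommRing R] {n : ℕ}
    {p : MvPolynomial (Fin (n + 1)) R} {r : MvPolynomial (Fin n) R}
    (h : aeval (Fin.cons r X) p = 0) : X 0 - rename Fin.succ r ∣ p := by
  obtain ⟨c, hc⟩ := Polynomial.dvd_iff_isRoot.mpr
    (by rwa [Polynomial.IsRoot, polynomial_eval_finSuccEquiv] : (finSuccEquiv R n p).IsRoot r)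
  refine ⟨(finSuccEquiv R n).symm c, (finSuccEquiv R n).injective ?_⟩
  simp [hc, finSuccEquiv_rename_succ, finSuccEquiv_X_zero]

/-- The generic point `(ω y + (ω + 1) z, y, z)` of the plane `x + ω y + (ω + 1) z = 0`
(in characteristic `2`), with coordinates in `K[y, z]`. -/
noncomputable def planePoint {K : Type*} [CommRing K] (ω : K) :
    Fin 3 → MvPolynomial (Fin 2) K :=
  Fin.cons (C ω * X 0 + C (ω + 1) * X 1) X

section planePoint
variable {K : Type*} [CommRing K] (ω : K)

@[simp] theorem planePoint_zero : planePoint ω 0 = C ω * X 0 + C (ω + 1) * X 1 := rfl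
@[simp] theorem planePoint_one : planePoint ω 1 = X 0 := rfl
@[simp] theorem planePoint_two : planePoint ω 2 = X 1 := rfl

end planePoint

theorem aeval_e3_ne_zero {K : Type*} [Field K] [CharP K 2] {ω : K} (hω₀ : ω ≠ 0)
    (hω₁ : ω + 1 ≠ 0) : aeval (planePoint ω) (e3 K) ≠ 0 := by
  have hX : (X 0 + X 1 : MvPolynomial (Fin 2) K) ≠ 0 := fun h => by
    simpa using congrArg (eval ![1, 0]) h
  have he3 : aeval (planePoint ω) (e3 K) = C (ω + 1) * C ω * (X 0 + X 1) ^ 3 := by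
    simp only [e3, map_add, map_mul, aeval_X, planePoint_zero, planePoint_one, planePoint_two,
      C_1]
    linear_combination
      (C ω + 1) * X 1 * (X 0 + X 1) ^ 2 * CharTwo.two_eq_zero (R := MvPolynomial (Fin 2) K)
  rw [he3]
  exact mul_ne_zero (mul_ne_zero (C_ne_zero.mpr hω₁) (C_ne_zero.mpr hω₀)) (pow_ne_zero _ hX)

theorem linearForm_dvd_of_e3_mul_eq_fsum {K : Type*} [Field K] [CharP K 2] {ω : K}
    (hω₀ : ω ≠ 0) (hω₁ : ω + 1 ≠ 0) {f : Polynomial K} {Φ : MvPolynomial (Fin 3) K}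
    (hΦ : e3 K * Φ = fsum f) (hf : aeval (planePoint ω) (fsum f) = 0) :
    X 0 + C ω * X 1 + C (ω + 1) * X 2 ∣ Φ := by
  rw [← hΦ, map_mul] at hf
  convert X_zero_sub_rename_dvd ((mul_eq_zero.mp hf).resolve_left (aeval_e3_ne_zero hω₀ hω₁))
    using 1
  simp [CharTwo.sub_eq_add]
  ring

theorem aeval_planePoint_fsum_X_pow {K : Type*} [CommRing K] [CharP K 2] {ω : K} {a b : ℕ}
    (ha : ω ^ 2 ^ a = ω) (hb : ω ^ 2 ^ b = ω) :
    aeval (planePoint ω) (fsum (Polynomial.X ^ (2 ^ a + 2 ^ b) : Polynomial K)) = 0 := by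
  rw [aeval_fsum]
  simp only [Polynomial.aeval_X_pow, planePoint_zero, planePoint_one, planePoint_two, map_add,
    map_one]
  exact sum_pow_two_pow_add_two_pow_eq_zero (by rw [← map_pow, ha]) (by rw [← map_pow, hb]) _ _

theorem aeval_X_one_zero_fsum_X_pow {K : Type*} [CommRing K] [CharP K 2] (a b : ℕ) :
    aeval ![(Polynomial.X : Polynomial K), 1, 0]
        (fsum (Polynomial.X ^ (2 ^ a + 2 ^ b) : Polynomial K)) =
      Polynomial.X ^ 2 ^ a + Polynomial.X ^ 2 ^ b := by
  rw [aeval_fsum]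
  simp [Polynomial.aeval_X_pow, add_one_pow_two_pow_add_two_pow]

theorem not_irreducible_of_linearForm_dvd {K : Type*} [Field K] {ω : K} {f : Polynomial K}
    {Φ : MvPolynomial (Fin 3) K} (hΦ : e3 K * Φ = fsum f)
    (hdvd : X 0 + C ω * X 1 + C (ω + 1) * X 2 ∣ Φ)
    (hdeg : 3 < (aeval ![(Polynomial.X : Polynomial K), 1, 0] (fsum f)).natDegree) :
    ¬ Irreducible Φ := by
  intro hirr
  obtain ⟨c, rfl⟩ := hdvd
  set ψ : MvPolynomial (Fin 3) K →ₐ[K] Polynomial K := aeval ![Polynomial.X, 1, 0]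
  have hψl : ψ (X 0 + C ω * X 1 + C (ω + 1) * X 2) = Polynomial.X + Polynomial.C ω := by
    simp [ψ, Polynomial.algebraMap_eq]
  rcases hirr.isUnit_or_isUnit rfl with hl | hc
  · have := Polynomial.natDegree_eq_zero_of_isUnit (hl.map ψ)
    rw [hψl, Polynomial.natDegree_X_add_C] at this
    exact one_ne_zero this
  · obtain ⟨u, -, hu⟩ := Polynomial.isUnit_iff.mp (hc.map ψ)
    have hle : (ψ (e3 K * ((X 0 + C ω * X 1 + C (ω + 1) * X 2) * c))).natDegree ≤ 3 := by
      rw [map_mul, map_mul, hψl, ← hu]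
      simp only [ψ, e3, map_add, map_mul, aeval_X, Matrix.cons_val_zero, Matrix.cons_val_one,
        Matrix.cons_val, add_zero, mul_one]
      compute_degree
    rw [hΦ] at hle
    omega

theorem exists_sq_add_self_add_one_eq_zero (K : Type*) [Field K] [IsAlgClosed K] :
    ∃ ω : K, ω ^ 2 + ω + 1 = 0 := by
  obtain ⟨ω, hω⟩ :=
    IsAlgClosed.exists_root (Polynomial.X ^ 2 + Polynomial.X + 1 : Polynomial K)
      (ne_of_eq_of_ne (b := 2) (by compute_degree!) (by decide))
  exact ⟨ω, by simpa using hω⟩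

theorem counterexample_x5_not_abs_irred
    (k : ℕ) (hk : 4 ≤ k) (hkeven : Even k)
    (f : Polynomial (ZMod 2))
    (hf : f = Polynomial.X ^ (2 ^ k + 1) + Polynomial.X ^ 5)
    (φ : MvPolynomial (Fin 3) (ZMod 2)) (hφ : e3 (ZMod 2) * φ = fsum f) :
    ¬ Irreducible (MvPolynomial.map
      (algebraMap (ZMod 2) (AlgebraicClosure (ZMod 2))) φ) := by
  obtain ⟨ω, hω⟩ := exists_sq_add_self_add_one_eq_zero (AlgebraicClosure (ZMod 2))
  have hω₀ : ω ≠ 0 := by rintro rfl; norm_num at hω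
  have hω₁ : ω + 1 ≠ 0 := fun h => one_ne_zero
    (by linear_combination hω - ω * h : (1 : AlgebraicClosure (ZMod 2)) = 0)
  have hω₃ : ω ^ 3 = 1 := by linear_combination (ω - 1) * hω
  set g : Polynomial (AlgebraicClosure (ZMod 2)) :=
    Polynomial.X ^ (2 ^ k + 2 ^ 0) + Polynomial.X ^ (2 ^ 2 + 2 ^ 0)
  have hΦ : e3 _ * map (algebraMap (ZMod 2) _) φ = fsum g := by
    simpa [map_e3, map_fsum, hf, g] using
      congrArg (map (algebraMap (ZMod 2) (AlgebraicClosure (ZMod 2)))) hφ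
  refine not_irreducible_of_linearForm_dvd hΦ
    (linearForm_dvd_of_e3_mul_eq_fsum hω₀ hω₁ hΦ ?_) ?_
  · rw [fsum_add, map_add, aeval_planePoint_fsum_X_pow (pow_two_pow_eq_self_of_even hω₃ hkeven)
      (pow_one ω), aeval_planePoint_fsum_X_pow (pow_two_pow_eq_self_of_even hω₃ even_two)
      (pow_one ω), add_zero]
  · have h16 : 2 ^ 4 ≤ 2 ^ k := Nat.pow_le_pow_right two_pos hk
    rw [fsum_add, map_add, aeval_X_one_zero_fsum_X_pow, aeval_X_one_zero_fsum_X_pow,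
      add_add_add_comm, CharTwo.add_self_eq_zero, add_zero,
      Polynomial.natDegree_add_eq_left_of_natDegree_lt] <;>
      simp only [Polynomial.natDegree_X_pow] <;> omega
end
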